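/- Let f : ℤ_N → ℂ be supported in E ⊆ ℤ_N and suppose the values of its DFT f̂ are missing on a set M ⊆ ℤ_N with |E|·|M| < N/2. Then f is the unique function supported in E whose DFT agrees with f̂ outside M; equivalently, if g is supported in a set of size at most |E| and ĝ = f̂ off M, then g = f. -/

import Mathlib

/-!
Discrete uncertainty principle: for `Φ ≠ 0` on `ZMod N`, the sup norm satisfies
`‖𝓕 Φ‖ ≤ |supp Φ| ‖Φ‖`, and `𝓕 (𝓕 Φ)` is `N` times the reflection of `Φ`, so
`N ‖Φ‖ ≤ |supp 𝓕 Φ| |supp Φ| ‖Φ‖`. Applied to `g - f`, whose support has at most `2 |E|`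
points and whose transform is supported in `M`, this gives `N ≤ 2 |E| |M|`.
-/

open scoped BigOperators Classical
noncomputable section

/-- One-dimensional DFT on ℤ_N with unitary normalization. -/
def dft1 (N : ℕ) [NeZero N] (f : ZMod N → ℂ) : ZMod N → ℂ :=
  fun m => ((1 / Real.sqrt N : ℝ) : ℂ) *
    ∑ t : ZMod N, f t *
      Complex.exp (-2 * Real.pi * Complex.I * (((m.val * t.val : ℕ) : ℂ) / (N : ℂ)))

open Finset ZMod

namespace ZMod

variable {N : ℕ} [NeZero N] {V : Type*} [NormedAddCommGroup V] [NormedSpace ℂ V]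

lemma norm_dft_le (Φ : ZMod N → V) : ‖𝓕 Φ‖ ≤ #{j | Φ j ≠ 0} * ‖Φ‖ := by
  refine pi_norm_le_iff_of_nonneg (by positivity) |>.mpr fun k => ?_
  rw [dft_apply,
    ← sum_filter_of_ne (p := fun j => Φ j ≠ 0) fun j _ hj hΦ => by simp [hΦ] at hj]
  calc ‖∑ j with Φ j ≠ 0, stdAddChar (-(j * k)) • Φ j‖
      ≤ ∑ j with Φ j ≠ 0, ‖Φ‖ := norm_sum_le_of_le _ fun j _ => by
        rw [norm_smul, stdAddChar_apply, Circle.norm_coe, one_mul]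
        exact norm_le_pi_norm Φ j
    _ = #{j | Φ j ≠ 0} * ‖Φ‖ := by rw [sum_const, nsmul_eq_mul]

lemma card_mul_norm_le_norm_dft_dft (Φ : ZMod N → V) : N * ‖Φ‖ ≤ ‖𝓕 (𝓕 Φ)‖ := by
  have hN : (0 : ℝ) < N := Nat.cast_pos.mpr (NeZero.pos N)
  rw [← le_div_iff₀' hN]
  refine pi_norm_le_iff_of_nonneg (by positivity) |>.mpr fun j => ?_
  rw [le_div_iff₀' hN]
  calc (N : ℝ) * ‖Φ j‖ = ‖𝓕 (𝓕 Φ) (-j)‖ := by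
        simp only [dft_dft, neg_neg, norm_smul, Complex.norm_natCast]
    _ ≤ ‖𝓕 (𝓕 Φ)‖ := norm_le_pi_norm _ _

theorem card_le_card_support_mul_card_support_dft {Φ : ZMod N → V} (hΦ : Φ ≠ 0) :
    N ≤ #{j | Φ j ≠ 0} * #{k | 𝓕 Φ k ≠ 0} := by
  have hpos : 0 < ‖Φ‖ := norm_pos_iff.mpr hΦ
  suffices (N : ℝ) * ‖Φ‖ ≤ #{j | Φ j ≠ 0} * #{k | 𝓕 Φ k ≠ 0} * ‖Φ‖ by
    exact_mod_cast le_of_mul_le_mul_right this hpos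
  calc (N : ℝ) * ‖Φ‖ ≤ ‖𝓕 (𝓕 Φ)‖ := card_mul_norm_le_norm_dft_dft Φ
    _ ≤ #{k | 𝓕 Φ k ≠ 0} * ‖𝓕 Φ‖ := norm_dft_le _
    _ ≤ #{k | 𝓕 Φ k ≠ 0} * (#{j | Φ j ≠ 0} * ‖Φ‖) := by gcongr; exact norm_dft_le Φ
    _ = #{j | Φ j ≠ 0} * #{k | 𝓕 Φ k ≠ 0} * ‖Φ‖ := by ring

end ZMod

lemma dft1_apply (N : ℕ) [NeZero N] (f : ZMod N → ℂ) (m : ZMod N) :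
    dft1 N f m = ((1 / Real.sqrt N : ℝ) : ℂ) * 𝓕 f m := by
  rw [dft1, dft_apply]
  congr 1
  refine sum_congr rfl fun t _ => ?_
  rw [smul_eq_mul, mul_comm (stdAddChar _)]
  congr 1
  have hphase : (-(t * m) : ZMod N) = ((-(m.val * t.val : ℕ) : ℤ) : ZMod N) := by
    push_cast
    rw [ZMod.natCast_val, ZMod.natCast_val, ZMod.cast_id, ZMod.cast_id]
    ring
  rw [hphase, ZMod.stdAddChar_coe]
  congr 1
  push_cast
  ring

lemma dft1_apply_eq_iff (N : ℕ) [NeZero N] (f g : ZMod N → ℂ) (m : ZMod N) :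
    dft1 N g m = dft1 N f m ↔ 𝓕 g m = 𝓕 f m := by
  have : ((1 / Real.sqrt N : ℝ) : ℂ) ≠ 0 := by simp [NeZero.ne N]
  rw [dft1_apply, dft1_apply, mul_right_inj' this]

lemma card_support_sub_le {α R : Type*} [Fintype α] [AddGroup R] (g f : α → R) :
    #{t | (g - f) t ≠ 0} ≤ #{t | g t ≠ 0} + #{t | f t ≠ 0} := by
  refine (card_le_card fun t => ?_).trans (card_union_le _ _)
  simp only [mem_filter, mem_univ, true_and, mem_union, Pi.sub_apply]
  contrapose!
  rintro ⟨hg, hf⟩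
  rw [hg, hf, sub_zero]

/-- Donoho–Stark uniqueness: if `f` is supported in `E`, its DFT is missing on `M`, and
`|E|·|M| < N/2`, then any `g` supported on a set of size at most `|E|` whose DFT agrees
with that of `f` off `M` equals `f`. -/
theorem donoho_stark_unique_recovery (N : ℕ) [NeZero N] (f : ZMod N → ℂ)
    (E M : Finset (ZMod N))
    (hsupp : ∀ t : ZMod N, f t ≠ 0 → t ∈ E)
    (hEM : ((E.card : ℝ) * (M.card : ℝ)) < (N : ℝ) / 2) :
    ∀ g : ZMod N → ℂ,
      (Finset.univ.filter fun t : ZMod N => g t ≠ 0).card ≤ E.card →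
      (∀ m : ZMod N, m ∉ M → dft1 N g m = dft1 N f m) →
      g = f := by
  intro g hg hdft
  by_contra hgf
  have hf : #{t | f t ≠ 0} ≤ #E := card_le_card fun t ht => hsupp t (mem_filter.mp ht).2
  have hS : #{t | (g - f) t ≠ 0} ≤ 2 * #E := by
    have := card_support_sub_le g f
    omega
  have hT : #{m | 𝓕 (g - f) m ≠ 0} ≤ #M := card_le_card fun m hm => by
    by_contra hmM
    rw [mem_filter, map_sub, Pi.sub_apply, (dft1_apply_eq_iff N f g m).mp (hdft m hmM),
      sub_self] at hm
    exact hm.2 rfl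
  have hN : (N : ℝ) ≤ 2 * #E * #M := by
    exact_mod_cast (card_le_card_support_mul_card_support_dft (sub_ne_zero.mpr hgf)).trans
      (Nat.mul_le_mul hS hT)
  linarith
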